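/- Let d be a positive integer and δ > (d+1)/2. Then for every 0 ≤ t ≤ 1, (1/B(2δ−d, δ)) ∫_t^1 (s²−t²)^{δ−(d+1)/2} (1−s)^{δ−1} ds = (1/B(2δ−d−1, δ+1)) ∫_t^1 (s²−t²)^{δ−(d+3)/2} s (1−s)^{δ} ds. -/

import Mathlib

/-!
With `α = δ - (d + 1) / 2`, integrate by parts against `u s = (s² - t²)^α` and
`v s = -(1 - s)^δ`: both vanish at the endpoint they meet, `u'` and `v'` are nonnegative (so
integrable), and one gets `2α ∫ (s² - t²)^(α-1) s (1 - s)^δ = δ ∫ (s² - t²)^α (1 - s)^(δ-1)`.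
Since `2α = 2δ - d - 1`, the recurrence `a B(a, b + 1) = b B(a + 1, b)` of the beta function
turns this into the claimed equality of normalised integrals.
-/

open MeasureTheory Set

noncomputable def Beta (a b : ℝ) : ℝ := ∫ t in Ioo (0:ℝ) 1, t ^ (a - 1) * (1 - t) ^ (b - 1)

lemma ofReal_Beta (a b : ℝ) : (Beta a b : ℂ) = Complex.betaIntegral a b := by
  rw [Complex.betaIntegral, intervalIntegral.integral_of_le zero_le_one,
    integral_Ioc_eq_integral_Ioo, Beta]
  refine integral_ofReal.symm.trans (setIntegral_congr_fun measurableSet_Ioo fun x hx => ?_)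
  simp_rw [RCLike.ofReal_mul, Complex.coe_algebraMap, Complex.ofReal_cpow hx.1.le,
    Complex.ofReal_cpow (by linarith [hx.2] : (0:ℝ) ≤ 1 - x)]
  push_cast
  ring

lemma Beta_eq_Gamma_mul_Gamma_div {a b : ℝ} (ha : 0 < a) (hb : 0 < b) :
    Beta a b = Real.Gamma a * Real.Gamma b / Real.Gamma (a + b) := by
  have h := Complex.Gamma_mul_Gamma_eq_betaIntegral (s := a) (t := b)
    (by simpa using ha) (by simpa using hb)
  rw [← ofReal_Beta, ← Complex.ofReal_add, Complex.Gamma_ofReal, Complex.Gamma_ofReal,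
    Complex.Gamma_ofReal] at h
  rw [eq_div_iff (Real.Gamma_pos_of_pos (add_pos ha hb)).ne']
  exact_mod_cast (h.trans (mul_comm _ _)).symm

lemma Beta_pos {a b : ℝ} (ha : 0 < a) (hb : 0 < b) : 0 < Beta a b := by
  rw [Beta_eq_Gamma_mul_Gamma_div ha hb]
  have := Real.Gamma_pos_of_pos ha
  have := Real.Gamma_pos_of_pos hb
  have := Real.Gamma_pos_of_pos (add_pos ha hb)
  positivity

lemma mul_Beta_add_one {a b : ℝ} (ha : 0 < a) (hb : 0 < b) :
    a * Beta a (b + 1) = b * Beta (a + 1) b := by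
  have h := Complex.betaIntegral_recurrence (u := a) (v := b)
    (by simpa using ha) (by simpa using hb)
  rw [← Complex.ofReal_one, ← Complex.ofReal_add, ← Complex.ofReal_add, ← ofReal_Beta,
    ← ofReal_Beta] at h
  exact_mod_cast h

lemma hasDerivAt_sq_sub_sq_rpow {α t s : ℝ} (h : t ^ 2 < s ^ 2) :
    HasDerivAt (fun s => (s ^ 2 - t ^ 2) ^ α) (2 * α * ((s ^ 2 - t ^ 2) ^ (α - 1) * s)) s :=
  (((hasDerivAt_pow 2 s).sub_const (t ^ 2)).rpow_const (Or.inl (sub_pos.2 h).ne')).congr_deriv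
    (by ring)

lemma hasDerivAt_neg_one_sub_rpow {δ s : ℝ} (h : s < 1) :
    HasDerivAt (fun s => -(1 - s) ^ δ) (δ * (1 - s) ^ (δ - 1)) s :=
  (((hasDerivAt_id s).const_sub 1).rpow_const (Or.inl (sub_pos.2 h).ne')).neg.congr_deriv
    (by simp only [id]; ring)

lemma integral_by_parts_sq_sub_sq_rpow {α δ t : ℝ} (hα : 0 < α) (hδ : 0 < δ) (ht₀ : 0 ≤ t)
    (ht₁ : t ≤ 1) :
    2 * α * ∫ s in Ioo t 1, (s ^ 2 - t ^ 2) ^ (α - 1) * s * (1 - s) ^ δ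
      = δ * ∫ s in Ioo t 1, (s ^ 2 - t ^ 2) ^ α * (1 - s) ^ (δ - 1) := by
  set u : ℝ → ℝ := fun s => (s ^ 2 - t ^ 2) ^ α
  set v : ℝ → ℝ := fun s => -(1 - s) ^ δ
  set u' : ℝ → ℝ := fun s => 2 * α * ((s ^ 2 - t ^ 2) ^ (α - 1) * s)
  set v' : ℝ → ℝ := fun s => δ * (1 - s) ^ (δ - 1)
  have hu : ContinuousOn u (uIcc t 1) :=
    (continuous_id.pow 2 |>.sub continuous_const |>.rpow_const fun _ => Or.inr hα.le).continuousOn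
  have hv : ContinuousOn v (uIcc t 1) :=
    ((continuous_const.sub continuous_id).rpow_const fun _ => Or.inr hδ.le).neg.continuousOn
  have hIoo : Ioo (min t 1) (max t 1) = Ioo t 1 := by rw [min_eq_left ht₁, max_eq_right ht₁]
  have hsq : ∀ s ∈ Ioo t 1, t ^ 2 < s ^ 2 := fun s hs => by nlinarith [hs.1]
  have huu' : ∀ s ∈ Ioo (min t 1) (max t 1), HasDerivAt u (u' s) s :=
    hIoo ▸ fun s hs => hasDerivAt_sq_sub_sq_rpow (hsq s hs)
  have hvv' : ∀ s ∈ Ioo (min t 1) (max t 1), HasDerivAt v (v' s) s :=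
    hIoo ▸ fun s hs => hasDerivAt_neg_one_sub_rpow hs.2
  have hu'_nonneg : ∀ s ∈ Ioo (min t 1) (max t 1), 0 ≤ u' s := by
    rw [hIoo]
    intro s hs
    have : 0 ≤ s := ht₀.trans hs.1.le
    have : 0 ≤ s ^ 2 - t ^ 2 := (sub_pos.2 (hsq s hs)).le
    positivity
  have hv'_nonneg : ∀ s ∈ Ioo (min t 1) (max t 1), 0 ≤ v' s := by
    rw [hIoo]
    intro s hs
    have : 0 ≤ 1 - s := by linarith [hs.2]
    positivity
  have hparts := intervalIntegral.integral_mul_deriv_eq_deriv_mul_of_hasDerivAt hu hv huu' hvv'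
    (intervalIntegral.intervalIntegrable_deriv_of_nonneg hu huu' hu'_nonneg)
    (intervalIntegral.intervalIntegrable_deriv_of_nonneg hv hvv' hv'_nonneg)
  simp only [u, v, u', v', sub_self, Real.zero_rpow hα.ne', Real.zero_rpow hδ.ne', neg_zero,
    mul_zero, zero_mul] at hparts
  simp only [intervalIntegral.integral_of_le ht₁, integral_Ioc_eq_integral_Ioo] at hparts
  calc 2 * α * ∫ s in Ioo t 1, (s ^ 2 - t ^ 2) ^ (α - 1) * s * (1 - s) ^ δ
      = -∫ s in Ioo t 1, 2 * α * ((s ^ 2 - t ^ 2) ^ (α - 1) * s) * -(1 - s) ^ δ := by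
        rw [← integral_const_mul, ← integral_neg]
        congr 1 with s
        ring
    _ = ∫ s in Ioo t 1, (s ^ 2 - t ^ 2) ^ α * (δ * (1 - s) ^ (δ - 1)) := by
        rw [hparts, zero_sub]
    _ = δ * ∫ s in Ioo t 1, (s ^ 2 - t ^ 2) ^ α * (1 - s) ^ (δ - 1) := by
        rw [← integral_const_mul]
        congr 1 with s
        ring

theorem stmt13_general (d : ℕ) (δ : ℝ) (hδ : ((d : ℝ) + 1) / 2 < δ) :
    ∀ t ∈ Icc (0 : ℝ) 1,
      1 / Beta (2 * δ - (d : ℝ)) δ *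
          ∫ s in Ioo t 1, (s ^ 2 - t ^ 2) ^ (δ - ((d : ℝ) + 1) / 2) * (1 - s) ^ (δ - 1) =
        1 / Beta (2 * δ - (d : ℝ) - 1) (δ + 1) *
          ∫ s in Ioo t 1, (s ^ 2 - t ^ 2) ^ (δ - ((d : ℝ) + 3) / 2) * s * (1 - s) ^ δ := by
  intro t ht
  have hδ₀ : 0 < δ := by linarith [d.cast_nonneg (α := ℝ)]
  have ha : 0 < 2 * δ - d - 1 := by linarith
  have hparts := integral_by_parts_sq_sub_sq_rpow (α := δ - (d + 1) / 2) (by linarith) hδ₀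
    ht.1 ht.2
  have hrec := mul_Beta_add_one ha hδ₀
  rw [sub_add_cancel] at hrec
  have hB₁ := Beta_pos (a := 2 * δ - d) (by linarith) hδ₀
  have hB₂ := Beta_pos (b := δ + 1) ha (by linarith)
  rw [show δ - ((d : ℝ) + 3) / 2 = δ - (d + 1) / 2 - 1 by ring, one_div_mul_eq_div,
    one_div_mul_eq_div, div_eq_div_iff hB₁.ne' hB₂.ne']
  refine mul_left_cancel₀ ha.ne' ?_
  set I := ∫ s in Ioo t 1, (s ^ 2 - t ^ 2) ^ (δ - (d + 1) / 2) * (1 - s) ^ (δ - 1)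
  linear_combination I * hrec - Beta (2 * δ - d) δ * hparts

theorem stmt13 (d : ℕ) (hd : 0 < d) (δ : ℝ) (hδ : ((d : ℝ) + 1) / 2 < δ) :
    ∀ t ∈ Icc (0 : ℝ) 1,
      1 / Beta (2 * δ - (d : ℝ)) δ *
          ∫ s in Ioo t 1, (s ^ 2 - t ^ 2) ^ (δ - ((d : ℝ) + 1) / 2) * (1 - s) ^ (δ - 1) =
        1 / Beta (2 * δ - (d : ℝ) - 1) (δ + 1) *
          ∫ s in Ioo t 1, (s ^ 2 - t ^ 2) ^ (δ - ((d : ℝ) + 3) / 2) * s * (1 - s) ^ δ :=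
  stmt13_general d δ hδ
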